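/- Let k > 1 and let D be a (q^{init}_k, v₀)-rooted {q^{leaf}}-leaf-covering deduction tree of the BVASS B_k, where v₀(d_i) = v₀(d′_i) = 0 for all i < k. Then for each node n in D whose state label is q^{init}_k and at which d_{k−1} + d′_{k−1} has some value h′ < tower(k−1), there exist two incomparable descendants n₁ and n₂ of n (neither an ancestor of the other) whose state labels are q^{loop}_k and at which the values of d_{k−1} + d′_{k−1} are at most h′ + 1. -/

import Mathlib

/-- An alternating branching VASS with full zero tests (ABVASS₀):
states `Q`, counters indexed by `ι`, with unary, fork, split, and
full-zero-test rules. -/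
structure ABVASS (Q ι : Type) where
  Tu : Set (Q × (ι → ℤ) × Q)
  Tf : Set (Q × Q × Q)
  Ts : Set (Q × Q × Q)
  Tz : Set (Q × Q)

/-- Configurations: a state together with a vector of naturals. -/
abbrev Config (Q ι : Type) := Q × (ι → ℕ)

/-- Finite deduction trees labelled by configurations, with unary and
binary internal nodes. -/
inductive DTree (Q ι : Type) where
  | leaf : Config Q ι → DTree Q ι
  | node1 : Config Q ι → DTree Q ι → DTree Q ι
  | node2 : Config Q ι → DTree Q ι → DTree Q ι → DTree Q ι

namespace DTree

variable {Q ι : Type}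

/-- The root label of a deduction tree. -/
def root : DTree Q ι → Config Q ι
  | .leaf c => c
  | .node1 c _ => c
  | .node2 c _ _ => c

/-- Height: the maximum number of edges from the root to a leaf. -/
def height : DTree Q ι → ℕ
  | .leaf _ => 0
  | .node1 _ t => t.height + 1
  | .node2 _ t₁ t₂ => max t₁.height t₂.height + 1

/-- The list of leaf labels. -/
def leaves : DTree Q ι → List (Config Q ι)
  | .leaf c => [c]
  | .node1 _ t => t.leaves
  | .node2 _ t₁ t₂ => t₁.leaves ++ t₂.leaves

end DTree

variable {Q ι : Type}

/-- Unary rule, applied top-down: from `(q, v)` derive `(q₁, v + u)`,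
provided `v + u` is non-negative. -/
def UnaryStep (A : ABVASS Q ι) (c c' : Config Q ι) : Prop :=
  ∃ u, (c.1, u, c'.1) ∈ A.Tu ∧ ∀ i, (c'.2 i : ℤ) = (c.2 i : ℤ) + u i

/-- Full zero test: from `(q, 0)` derive `(q₁, 0)`. -/
def ZeroStep (A : ABVASS Q ι) (c c' : Config Q ι) : Prop :=
  (c.1, c'.1) ∈ A.Tz ∧ c.2 = (fun _ => 0) ∧ c'.2 = (fun _ => 0)

/-- Fork (children copy the parent's vector) or split (the parent's
vector is a sum of the children's). -/
def BinStep (A : ABVASS Q ι) (c c₁ c₂ : Config Q ι) : Prop :=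
  ((c.1, c₁.1, c₂.1) ∈ A.Tf ∧ c₁.2 = c.2 ∧ c₂.2 = c.2) ∨
  ((c.1, c₁.1, c₂.1) ∈ A.Ts ∧ c.2 = c₁.2 + c₂.2)

/-- A tree is a valid deduction tree when every internal node's children
are obtained by one of the permitted steps. -/
inductive ValidTree (step1 : Config Q ι → Config Q ι → Prop)
    (step2 : Config Q ι → Config Q ι → Config Q ι → Prop) : DTree Q ι → Prop
  | leaf (c : Config Q ι) : ValidTree step1 step2 (.leaf c)
  | one {c : Config Q ι} {t : DTree Q ι} :
      step1 c t.root → ValidTree step1 step2 t → ValidTree step1 step2 (.node1 c t)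
  | two {c : Config Q ι} {t₁ t₂ : DTree Q ι} :
      step2 c t₁.root t₂.root → ValidTree step1 step2 t₁ → ValidTree step1 step2 t₂ →
      ValidTree step1 step2 (.node2 c t₁ t₂)

/-- Deduction trees of an ABVASS₀ (standard semantics). -/
def IsDeduction (A : ABVASS Q ι) : DTree Q ι → Prop :=
  ValidTree (fun c c' => UnaryStep A c c' ∨ ZeroStep A c c') (BinStep A)

/-- `tower 0 = 1`, `tower (n+1) = 2 ^ tower n`. -/
def tower : ℕ → ℕ
  | 0 => 1
  | n + 1 => 2 ^ tower n

/-- States of the BVASS hierarchy `B_k`. -/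
inductive BSt where
  | qinit : ℕ → BSt
  | q1 : ℕ → BSt
  | q2 : ℕ → BSt
  | qloop : ℕ → BSt
  | qleaf : BSt
deriving DecidableEq

/-- Counters: `Sum.inl i` is `d_i` and `Sum.inr i` is `d'_i` (for `i ≥ 1`). -/
abbrev Cnt := ℕ ⊕ ℕ

/-- The unit vector on counter `c`. -/
def e (c : Cnt) : Cnt → ℤ := fun c' => if c' = c then 1 else 0

/-- The BVASS `B_k`: `B_1` has the single unary rule
`qinit 1 →^{-2 e_{d_1}} qleaf`; for `2 ≤ j ≤ k` we add the unary rules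
`qinit j →^{+e_{d_{j-1}}} q1 j`, `q1 j →^{-e_{d_{j-1}} + 2 e_{d'_{j-1}}} q1 j`,
`q1 j →^0 q2 j`, `q2 j →^{-e_{d'_{j-1}} + e_{d_{j-1}}} q2 j`,
`qloop j →^0 qinit j`, `qloop j →^{-e_{d_j}} qinit (j-1)`, and the split
rule `q2 j → qloop j + qloop j`. -/
def Bsys (k : ℕ) : ABVASS BSt Cnt where
  Tu := {r | r = (BSt.qinit 1, -(2 • e (Sum.inl 1)), BSt.qleaf) ∨
    ∃ j, 2 ≤ j ∧ j ≤ k ∧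
      (r = (BSt.qinit j, e (Sum.inl (j - 1)), BSt.q1 j) ∨
       r = (BSt.q1 j, -e (Sum.inl (j - 1)) + 2 • e (Sum.inr (j - 1)), BSt.q1 j) ∨
       r = (BSt.q1 j, 0, BSt.q2 j) ∨
       r = (BSt.q2 j, -e (Sum.inr (j - 1)) + e (Sum.inl (j - 1)), BSt.q2 j) ∨
       r = (BSt.qloop j, 0, BSt.qinit j) ∨
       r = (BSt.qloop j, -e (Sum.inl j), BSt.qinit (j - 1)))}
  Tf := ∅
  Ts := {r | ∃ j, 2 ≤ j ∧ j ≤ k ∧ r = (BSt.q2 j, BSt.qloop j, BSt.qloop j)}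
  Tz := ∅

/-- The subtree at a node, identified by a path from the root:
`false` selects the (first) child, `true` the second child. -/
def subtreeAt {Q ι : Type} : DTree Q ι → List Bool → Option (DTree Q ι)
  | t, [] => some t
  | .leaf _, _ :: _ => none
  | .node1 _ t, false :: p => subtreeAt t p
  | .node1 _ _, true :: _ => none
  | .node2 _ t₁ _, false :: p => subtreeAt t₁ p
  | .node2 _ _ t₂, true :: p => subtreeAt t₂ p

/-- Two nodes (paths) are incomparable when neither is an ancestor of
(i.e. a prefix of) the other. -/
def Incomparable (p₁ p₂ : List Bool) : Prop := ¬ p₁ <+: p₂ ∧ ¬ p₂ <+: p₁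


/-!
The gadget of level `j + 1` turns a `qinit (j + 1)` node whose weight `d_j + d'_j` is `m` into a
`q2` node of weight at most `2m + 2` (increment `d_j`, double it into `d'_j`, move it back), which
then splits into two `qloop (j + 1)` nodes whose weights add up to at most `2m + 2`. Either both are
at most `m + 1`, or one of them is at most `m` and the argument restarts from it: such a node cannot
leave level `j + 1`, because its `qloop (j + 1) → qinit j` rule would start a run of `B_j` with
`d_j ≤ m < tower j`, which is impossible. That last fact is proved by induction on the level: the
counter `d_{j+1}` is shared, not copied, by the split, so the two `qloop` descendants found above
show that a `qinit (j + 1)` node of weight `w` needs `d_{j+1} ≥ 2 ^ (tower j - w)`.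
-/

namespace DTree

variable {Q ι : Type}

@[simp] theorem root_leaf (c : Config Q ι) : (leaf c).root = c := rfl
@[simp] theorem root_node1 (c : Config Q ι) (t : DTree Q ι) : (node1 c t).root = c := rfl
@[simp] theorem root_node2 (c : Config Q ι) (t₁ t₂ : DTree Q ι) : (node2 c t₁ t₂).root = c := rfl

@[simp]
theorem subtreeAt_nil (t : DTree Q ι) : subtreeAt t [] = some t := by
  cases t <;> rfl

theorem subtreeAt_append (p q : List Bool) (t : DTree Q ι) :
    subtreeAt t (p ++ q) = (subtreeAt t p).bind fun s => subtreeAt s q := by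
  induction p generalizing t with
  | nil => simp
  | cons x p ih => cases t <;> cases x <;> simp [subtreeAt, ih]

theorem mem_leaves_of_subtreeAt {p : List Bool} {t s : DTree Q ι} (h : subtreeAt t p = some s)
    {l : Config Q ι} (hl : l ∈ s.leaves) : l ∈ t.leaves := by
  induction p generalizing t with
  | nil => simp_all
  | cons x p ih =>
    cases t <;> cases x <;> simp only [subtreeAt, reduceCtorEq] at h <;> simp [leaves, ih h]

theorem height_le_of_subtreeAt {p : List Bool} {t s : DTree Q ι} (h : subtreeAt t p = some s) :
    s.height ≤ t.height := by
  induction p generalizing t with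
  | nil => simp_all
  | cons x p ih =>
    cases t <;> cases x <;> simp only [subtreeAt, reduceCtorEq] at h <;> grind [height]

def IsLeafCovering (L : Set Q) (t : DTree Q ι) : Prop :=
  ∀ l ∈ t.leaves, l.1 ∈ L

namespace IsLeafCovering

variable {L : Set Q}

theorem root_mem_of_leaf {c : Config Q ι} (h : (leaf c).IsLeafCovering L) : c.1 ∈ L :=
  h c (List.mem_singleton_self c)

theorem of_node1 {c : Config Q ι} {t : DTree Q ι} (h : (node1 c t).IsLeafCovering L) :
    t.IsLeafCovering L :=
  h

theorem of_node2 {c : Config Q ι} {t₁ t₂ : DTree Q ι} (h : (node2 c t₁ t₂).IsLeafCovering L) :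
    t₁.IsLeafCovering L ∧ t₂.IsLeafCovering L :=
  ⟨fun l hl => h l (List.mem_append_left _ hl), fun l hl => h l (List.mem_append_right _ hl)⟩

theorem of_subtreeAt {t s : DTree Q ι} (h : t.IsLeafCovering L) {p : List Bool}
    (hs : subtreeAt t p = some s) : s.IsLeafCovering L :=
  fun _ hl => h _ (mem_leaves_of_subtreeAt hs hl)

end IsLeafCovering

end DTree

theorem Incomparable.cons {a b : List Bool} (h : Incomparable a b) (x : Bool) :
    Incomparable (x :: a) (x :: b) := by
  simpa [Incomparable] using h

theorem Incomparable.append_left {a b : List Bool} (h : Incomparable a b) (p : List Bool) :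
    Incomparable (p ++ a) (p ++ b) := by
  simpa [Incomparable] using h

theorem incomparable_false_true : Incomparable [false] [true] := by
  simp [Incomparable]

section StepInvariants

variable {Q ι : Type} {step1 : Config Q ι → Config Q ι → Prop}
  {step2 : Config Q ι → Config Q ι → Config Q ι → Prop}

def StepInvariant (step1 : Config Q ι → Config Q ι → Prop)
    (step2 : Config Q ι → Config Q ι → Config Q ι → Prop) (P : Config Q ι → Prop) : Prop :=
  (∀ c c', step1 c c' → P c → P c') ∧ ∀ c c₁ c₂, step2 c c₁ c₂ → P c → P c₁ ∧ P c₂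

def StepNonincreasing (step1 : Config Q ι → Config Q ι → Prop)
    (step2 : Config Q ι → Config Q ι → Config Q ι → Prop) (P : Config Q ι → Prop)
    (f : Config Q ι → ℕ) : Prop :=
  (∀ c c', step1 c c' → P c → f c' ≤ f c) ∧ ∀ c c₁ c₂, step2 c c₁ c₂ → P c → f c₁ + f c₂ ≤ f c

namespace ValidTree

theorem of_subtreeAt {t s : DTree Q ι} (hv : ValidTree step1 step2 t) {p : List Bool}
    (h : subtreeAt t p = some s) : ValidTree step1 step2 s := by
  induction p generalizing t with
  | nil => simp_all
  | cons x p ih => cases hv <;> cases x <;> simp only [subtreeAt, reduceCtorEq] at h <;> grind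

theorem invariant {P : Config Q ι → Prop} (hP : StepInvariant step1 step2 P) {t s : DTree Q ι}
    (hv : ValidTree step1 step2 t) (ht : P t.root) {p : List Bool} (h : subtreeAt t p = some s) :
    P s.root := by
  induction p generalizing t with
  | nil => simp_all
  | cons x p ih =>
    cases hv with
    | leaf => simp [subtreeAt] at h
    | one hs hv =>
      cases x
      · exact ih hv (hP.1 _ _ hs ht) h
      · simp [subtreeAt] at h
    | two hs hv₁ hv₂ =>
      cases x
      · exact ih hv₁ (hP.2 _ _ _ hs ht).1 h
      · exact ih hv₂ (hP.2 _ _ _ hs ht).2 h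

theorem exists_leaf {P : Config Q ι → Prop} (hP : StepInvariant step1 step2 P) {t : DTree Q ι}
    (hv : ValidTree step1 step2 t) (ht : P t.root) : ∃ l ∈ t.leaves, P l := by
  induction hv with
  | leaf c => exact ⟨c, List.mem_singleton_self c, ht⟩
  | one hs _ ih => exact ih (hP.1 _ _ hs ht)
  | two hs _ _ ih₁ =>
    obtain ⟨l, hl, hPl⟩ := ih₁ (hP.2 _ _ _ hs ht).1
    exact ⟨l, List.mem_append_left _ hl, hPl⟩

theorem le_of_subtreeAt {P : Config Q ι → Prop} {f : Config Q ι → ℕ}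
    (hP : StepInvariant step1 step2 P) (hf : StepNonincreasing step1 step2 P f) {t s : DTree Q ι}
    (hv : ValidTree step1 step2 t) (ht : P t.root) {p : List Bool} (h : subtreeAt t p = some s) :
    f s.root ≤ f t.root := by
  refine (hv.invariant (P := fun c => P c ∧ f c ≤ f t.root) ⟨?_, ?_⟩ ⟨ht, le_rfl⟩ h).2
  · exact fun c c' hs ⟨hc, hfc⟩ => ⟨hP.1 c c' hs hc, (hf.1 c c' hs hc).trans hfc⟩
  · intro c c₁ c₂ hs ⟨hc, hfc⟩
    have := hf.2 c c₁ c₂ hs hc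
    exact ⟨⟨(hP.2 c c₁ c₂ hs hc).1, by omega⟩, ⟨(hP.2 c c₁ c₂ hs hc).2, by omega⟩⟩

theorem add_le_of_incomparable {P : Config Q ι → Prop} {f : Config Q ι → ℕ}
    (hP : StepInvariant step1 step2 P) (hf : StepNonincreasing step1 step2 P f)
    {t ta tb : DTree Q ι} (hv : ValidTree step1 step2 t) (ht : P t.root) {a b : List Bool}
    (hab : Incomparable a b) (ha : subtreeAt t a = some ta) (hb : subtreeAt t b = some tb) :
    f ta.root + f tb.root ≤ f t.root := by
  induction a generalizing b t with
  | nil => exact absurd List.nil_prefix hab.1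
  | cons x a ih =>
    rcases b with _ | ⟨y, b⟩
    · exact absurd List.nil_prefix hab.2
    have hab' : x = y → Incomparable a b := by rintro rfl; simpa [Incomparable] using hab
    cases hv with
    | leaf => simp [subtreeAt] at ha
    | one hs hv =>
      cases x <;> cases y <;> simp only [subtreeAt, reduceCtorEq] at ha hb
      exact (ih hv (hP.1 _ _ hs ht) (hab' rfl) ha hb).trans (hf.1 _ _ hs ht)
    | two hs hv₁ hv₂ =>
      obtain ⟨h₁, h₂⟩ := hP.2 _ _ _ hs ht
      have hsum := hf.2 _ _ _ hs ht
      simp only [DTree.root_node2]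
      cases x <;> cases y <;> simp only [subtreeAt] at ha hb
      · exact (ih hv₁ h₁ (hab' rfl) ha hb).trans (by omega)
      · have := hv₁.le_of_subtreeAt hP hf h₁ ha
        have := hv₂.le_of_subtreeAt hP hf h₂ hb
        omega
      · have := hv₂.le_of_subtreeAt hP hf h₂ ha
        have := hv₁.le_of_subtreeAt hP hf h₁ hb
        omega
      · exact (ih hv₂ h₂ (hab' rfl) ha hb).trans (by omega)

end ValidTree

end StepInvariants

/-- The rules leaving a state of level `j` only touch the counters `d_{j-1}`, `d'_{j-1}`, `d_j`. -/
def BSt.level : BSt → ℕ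
  | .qinit j | .q1 j | .q2 j | .qloop j => j
  | .qleaf => 0

namespace Bsys

variable {K j m : ℕ}

section Rules

variable {q q' : BSt} {u : Cnt → ℤ}

theorem level_le_of_mem_Tu (h : (q, u, q') ∈ (Bsys K).Tu) : q'.level ≤ q.level := by
  simp only [Bsys, Set.mem_ofPred_eq, Prod.ext_iff] at h
  rcases h with h | ⟨j, -, -, h | h | h | h | h | h⟩ <;>
    obtain ⟨rfl, -, rfl⟩ := h <;> simp [BSt.level]

theorem apply_inl_nonpos_of_mem_Tu (h : (q, u, q') ∈ (Bsys K).Tu) (hj : q.level ≤ j) :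
    u (.inl j) ≤ 0 := by
  simp only [Bsys, Set.mem_ofPred_eq, Prod.ext_iff] at h
  rcases h with h | ⟨j, hj2, -, h | h | h | h | h | h⟩ <;>
    obtain ⟨rfl, rfl, rfl⟩ := h <;> simp only [BSt.level] at * <;> simp [e] <;> grind

theorem apply_inl_level_neg_of_mem_Tu (h : (q, u, q') ∈ (Bsys K).Tu) (hlt : q'.level < q.level) :
    u (.inl q.level) < 0 := by
  simp only [Bsys, Set.mem_ofPred_eq, Prod.ext_iff] at h
  rcases h with h | ⟨j, hj2, -, h | h | h | h | h | h⟩ <;>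
    obtain ⟨rfl, rfl, rfl⟩ := h <;> simp only [BSt.level] at * <;> simp [e] <;> grind

theorem apply_eq_zero_of_mem_Tu (h : (q, u, q') ∈ (Bsys K).Tu) {i : ℕ} (hi : i + 2 ≤ q.level) :
    u (.inl i) = 0 ∧ u (.inr i) = 0 := by
  simp only [Bsys, Set.mem_ofPred_eq, Prod.ext_iff] at h
  rcases h with h | ⟨j, hj2, -, h | h | h | h | h | h⟩ <;>
    obtain ⟨rfl, rfl, rfl⟩ := h <;> simp only [BSt.level] at * <;> simp [e] <;> grind

theorem mem_Tu_qinit (hj : 2 ≤ j) (h : (.qinit j, u, q') ∈ (Bsys K).Tu) :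
    q' = .q1 j ∧ u = e (.inl (j - 1)) := by
  simp only [Bsys, Set.mem_ofPred_eq, Prod.ext_iff] at h
  grind

theorem mem_Tu_qinit_one (h : (.qinit 1, u, q') ∈ (Bsys K).Tu) :
    q' = .qleaf ∧ u = -(2 • e (.inl 1)) := by
  simp only [Bsys, Set.mem_ofPred_eq, Prod.ext_iff] at h
  grind

theorem mem_Tu_q1 (h : (.q1 j, u, q') ∈ (Bsys K).Tu) :
    (q' = .q1 j ∧ u = -e (.inl (j - 1)) + 2 • e (.inr (j - 1))) ∨ (q' = .q2 j ∧ u = 0) := by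
  simp only [Bsys, Set.mem_ofPred_eq, Prod.ext_iff] at h
  grind

theorem mem_Tu_q2 (h : (.q2 j, u, q') ∈ (Bsys K).Tu) :
    q' = .q2 j ∧ u = -e (.inr (j - 1)) + e (.inl (j - 1)) := by
  simp only [Bsys, Set.mem_ofPred_eq, Prod.ext_iff] at h
  grind

theorem mem_Tu_qloop (h : (.qloop j, u, q') ∈ (Bsys K).Tu) :
    (q' = .qinit j ∧ u = 0) ∨ (q' = .qinit (j - 1) ∧ u = -e (.inl j)) := by
  simp only [Bsys, Set.mem_ofPred_eq, Prod.ext_iff] at h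
  grind

end Rules

theorem unaryStep_of_step {c c' : Config BSt Cnt}
    (h : UnaryStep (Bsys K) c c' ∨ ZeroStep (Bsys K) c c') : UnaryStep (Bsys K) c c' :=
  h.resolve_right fun ⟨hz, _⟩ => by simp [Bsys] at hz

theorem exists_of_binStep {c c₁ c₂ : Config BSt Cnt} (h : BinStep (Bsys K) c c₁ c₂) :
    ∃ j, c.1 = .q2 j ∧ c₁.1 = .qloop j ∧ c₂.1 = .qloop j ∧ c.2 = c₁.2 + c₂.2 := by
  rcases h with ⟨hf, -⟩ | ⟨hs, hadd⟩
  · simp [Bsys] at hf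
  · simp only [Bsys, Set.mem_ofPred_eq, Prod.ext_iff] at hs
    obtain ⟨j, -, -, h, h₁, h₂⟩ := hs
    exact ⟨j, h, h₁, h₂, hadd⟩

theorem eq_node1_of_isLeafCovering {t : DTree BSt Cnt} (hv : IsDeduction (Bsys K) t)
    (hc : t.IsLeafCovering {.qleaf}) (hleaf : t.root.1 ≠ .qleaf) (hq2 : ∀ i, t.root.1 ≠ .q2 i) :
    ∃ c s, t = .node1 c s ∧ UnaryStep (Bsys K) c s.root ∧ IsDeduction (Bsys K) s ∧
      s.IsLeafCovering {.qleaf} := by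
  cases hv with
  | leaf c => exact absurd hc.root_mem_of_leaf hleaf
  | one hs hv => exact ⟨_, _, rfl, unaryStep_of_step hs, hv, hc.of_node1⟩
  | two hs =>
    obtain ⟨i, hq, -⟩ := exists_of_binStep hs
    exact absurd hq (hq2 i)

abbrev Invariant (K : ℕ) (P : Config BSt Cnt → Prop) : Prop :=
  StepInvariant (fun c c' => UnaryStep (Bsys K) c c' ∨ ZeroStep (Bsys K) c c') (BinStep (Bsys K)) P

theorem invariant_of_steps {P : Config BSt Cnt → Prop}
    (h₁ : ∀ c c', UnaryStep (Bsys K) c c' → P c → P c')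
    (h₂ : ∀ j (c c₁ c₂ : Config BSt Cnt), c.1 = .q2 j → c₁.1 = .qloop j → c₂.1 = .qloop j →
      c.2 = c₁.2 + c₂.2 → P c → P c₁ ∧ P c₂) : Invariant K P := by
  refine ⟨fun c c' h => h₁ c c' (unaryStep_of_step h), fun c c₁ c₂ h => ?_⟩
  obtain ⟨j, hq, hq₁, hq₂, hadd⟩ := exists_of_binStep h
  exact h₂ j c c₁ c₂ hq hq₁ hq₂ hadd

def ZeroUpTo (m : ℕ) (v : Cnt → ℕ) : Prop :=
  ∀ i, 1 ≤ i → i ≤ m → v (.inl i) = 0 ∧ v (.inr i) = 0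

theorem ZeroUpTo.mono {n : ℕ} {v : Cnt → ℕ} (h : ZeroUpTo m v) (hnm : n ≤ m) : ZeroUpTo n v :=
  fun i hi hin => h i hi (hin.trans hnm)

theorem ZeroUpTo.of_add {v₁ v₂ : Cnt → ℕ} (h : ZeroUpTo m (v₁ + v₂)) :
    ZeroUpTo m v₁ ∧ ZeroUpTo m v₂ := by
  constructor <;> intro i hi him <;> have := h i hi him <;> simp only [Pi.add_apply] at this <;>
    omega

theorem ZeroUpTo.of_unaryStep {c c' : Config BSt Cnt} (h : UnaryStep (Bsys K) c c')
    (hl : m + 2 ≤ c.1.level) (hz : ZeroUpTo m c.2) : ZeroUpTo m c'.2 := by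
  obtain ⟨u, hu, hc'⟩ := h
  intro i hi him
  have := apply_eq_zero_of_mem_Tu hu (i := i) (by omega)
  have := hz i hi him
  have := hc' (.inl i)
  have := hc' (.inr i)
  omega

theorem zeroUpTo_of_subtreeAt {t s : DTree BSt Cnt} (hv : IsDeduction (Bsys K) t)
    (ht : ZeroUpTo m t.root.2) {p : List Bool} (hs : subtreeAt t p = some s)
    (hl : m + 2 ≤ s.root.1.level) : ZeroUpTo m s.root.2 := by
  refine hv.invariant (P := fun c => m + 2 ≤ c.1.level → ZeroUpTo m c.2) ?_ (fun _ => ht) hs hl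
  refine invariant_of_steps (fun c c' h hc hl' => ?_) fun j c c₁ c₂ hq hq₁ hq₂ hadd hc => ?_
  · have : c'.1.level ≤ c.1.level := level_le_of_mem_Tu h.choose_spec.1
    exact (hc (by omega)).of_unaryStep h (by omega)
  · have hz := fun hl => (hadd ▸ hc hl).of_add
    simp only [hq, hq₁, hq₂, BSt.level] at hz ⊢
    exact ⟨fun hl => (hz hl).1, fun hl => (hz hl).2⟩

theorem inl_add_le_of_incomparable {t ta tb : DTree BSt Cnt} (hv : IsDeduction (Bsys K) t)
    (hl : t.root.1.level ≤ j) {a b : List Bool} (hab : Incomparable a b)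
    (ha : subtreeAt t a = some ta) (hb : subtreeAt t b = some tb) :
    ta.root.2 (.inl j) + tb.root.2 (.inl j) ≤ t.root.2 (.inl j) := by
  refine hv.add_le_of_incomparable (P := fun c => c.1.level ≤ j) (f := fun c => c.2 (.inl j))
    ?_ ⟨fun c c' h hc => ?_, fun c c₁ c₂ h _ => ?_⟩ hl hab ha hb
  · refine invariant_of_steps (fun c c' h hc => ?_) fun i c c₁ c₂ hq hq₁ hq₂ _ hc => ?_
    · exact (level_le_of_mem_Tu h.choose_spec.1).trans hc
    · simp_all [BSt.level]
  · obtain ⟨u, hu, hc'⟩ := unaryStep_of_step h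
    have := apply_inl_nonpos_of_mem_Tu hu hc
    have := hc' (.inl j)
    dsimp only
    omega
  · obtain ⟨i, -, -, -, hadd⟩ := exists_of_binStep h
    simp [hadd]

theorem pos_inl_of_isLeafCovering {t : DTree BSt Cnt} (hv : IsDeduction (Bsys K) t)
    (hc : t.IsLeafCovering {.qleaf}) (hj : 1 ≤ j) (hl : t.root.1.level = j) :
    0 < t.root.2 (.inl j) := by
  -- the only rules leaving level `j` consume `d_j`, so with `d_j = 0` no leaf could be reached
  have hinv : Invariant K fun c => c.1.level = j ∧ c.2 (.inl j) = 0 := by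
    refine invariant_of_steps (fun c c' h hc => ?_) fun i c c₁ c₂ hq hq₁ hq₂ hadd hc => ?_
    · obtain ⟨u, hu, hc'⟩ := h
      have := level_le_of_mem_Tu hu
      have := apply_inl_nonpos_of_mem_Tu hu hc.1.le
      have := hc' (.inl j)
      have := mt (apply_inl_level_neg_of_mem_Tu hu)
      grind
    · have := congrFun hadd (.inl j)
      simp only [Pi.add_apply] at this
      simp only [hq, hq₁, hq₂, BSt.level] at hc ⊢
      omega
  by_contra h0
  obtain ⟨l, hl, hlj, -⟩ := hv.exists_leaf hinv ⟨hl, by omega⟩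
  rw [hc l hl] at hlj
  simp only [BSt.level] at hlj
  omega

def weight (j : ℕ) (v : Cnt → ℕ) : ℕ := v (.inl j) + v (.inr j)

/-- The bound on `d_j, d'_j` along the gadget of level `j + 1` entered with weight at most `m`:
the `q1` loop preserves `2 d_j + d'_j` and the `q2` loop preserves `d_j + d'_j`. -/
def GadgetBound (j m : ℕ) (c : Config BSt Cnt) : Prop :=
  (c.1 = .qinit (j + 1) ∧ weight j c.2 ≤ m) ∨
  (c.1 = .q1 (j + 1) ∧ 2 * c.2 (.inl j) + c.2 (.inr j) ≤ 2 * m + 2) ∨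
  (c.1 = .q2 (j + 1) ∧ weight j c.2 ≤ 2 * m + 2) ∨
  (c.1 = .qloop (j + 1) ∧ weight j c.2 ≤ m)

theorem GadgetBound.level {c : Config BSt Cnt} (h : GadgetBound j m c) : c.1.level = j + 1 := by
  rcases h with ⟨h, -⟩ | ⟨h, -⟩ | ⟨h, -⟩ | ⟨h, -⟩ <;> simp [h, BSt.level]

theorem GadgetBound.of_unaryStep (hj : 1 ≤ j) {c c' : Config BSt Cnt} (hc : GadgetBound j m c)
    (h : UnaryStep (Bsys K) c c') :
    GadgetBound j m c' ∨ (c'.1 = .qinit j ∧ c'.2 (.inl j) ≤ m) := by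
  obtain ⟨u, hu, hc'⟩ := h
  have hl := hc' (.inl j)
  have hr := hc' (.inr j)
  unfold GadgetBound weight at hc ⊢
  rcases hc with ⟨hq, hw⟩ | ⟨hq, hw⟩ | ⟨hq, hw⟩ | ⟨hq, hw⟩ <;> rw [hq] at hu
  · obtain ⟨hq', rfl⟩ := mem_Tu_qinit (by omega) hu
    simp [e] at hl hr
    simp [hq']
    omega
  · rcases mem_Tu_q1 hu with ⟨hq', rfl⟩ | ⟨hq', rfl⟩ <;>
      simp [e] at hl hr <;> simp [hq'] <;> omega
  · obtain ⟨hq', rfl⟩ := mem_Tu_q2 hu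
    simp [e] at hl hr
    simp [hq']
    omega
  · rcases mem_Tu_qloop hu with ⟨hq', rfl⟩ | ⟨hq', rfl⟩ <;>
      simp [e] at hl hr <;> simp [hq'] <;> omega

theorem GadgetBound.of_binStep {c c₁ c₂ : Config BSt Cnt} (hc : GadgetBound j m c)
    (h : BinStep (Bsys K) c c₁ c₂) :
    c₁.1 = .qloop (j + 1) ∧ c₂.1 = .qloop (j + 1) ∧ weight j c₁.2 + weight j c₂.2 ≤ 2 * m + 2 := by
  obtain ⟨i, hq, hq₁, hq₂, hadd⟩ := exists_of_binStep h
  rcases hc with ⟨hq', -⟩ | ⟨hq', -⟩ | ⟨hq', hw⟩ | ⟨hq', -⟩ <;> rw [hq'] at hq <;> cases hq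
  refine ⟨hq₁, hq₂, ?_⟩
  simp only [weight, hadd, Pi.add_apply] at hw ⊢
  omega

def TowerBound (K j : ℕ) : Prop :=
  ∀ t : DTree BSt Cnt, IsDeduction (Bsys K) t → t.IsLeafCovering {.qleaf} →
    t.root.1 = .qinit j → ZeroUpTo (j - 1) t.root.2 → tower j ≤ t.root.2 (.inl j)

def TwoLoops (j m : ℕ) (t : DTree BSt Cnt) : Prop :=
  ∃ a b ta tb, a ≠ [] ∧ b ≠ [] ∧ Incomparable a b ∧
    subtreeAt t a = some ta ∧ subtreeAt t b = some tb ∧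
    ta.root.1 = .qloop (j + 1) ∧ tb.root.1 = .qloop (j + 1) ∧
    weight j ta.root.2 ≤ m + 1 ∧ weight j tb.root.2 ≤ m + 1

theorem TwoLoops.of_child {t t' : DTree BSt Cnt} (x : Bool)
    (hx : ∀ p, subtreeAt t' (x :: p) = subtreeAt t p) (h : TwoLoops j m t) : TwoLoops j m t' := by
  obtain ⟨a, b, ta, tb, -, -, hab, ha, hb, h⟩ := h
  exact ⟨x :: a, x :: b, ta, tb, by simp, by simp, hab.cons x, by rw [hx, ha], by rw [hx, hb], h⟩

theorem twoLoops_of_gadgetBound (hj : 1 ≤ j) (hT : TowerBound K j) (hm : m < tower j)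
    (t : DTree BSt Cnt) (hv : IsDeduction (Bsys K) t) (hc : t.IsLeafCovering {.qleaf})
    (hz : ZeroUpTo (j - 1) t.root.2) (hg : GadgetBound j m t.root) : TwoLoops j m t := by
  induction t with
  | leaf c =>
    have := hg.level
    rw [DTree.root_leaf, hc.root_mem_of_leaf] at this
    simp [BSt.level] at this
  | node1 c s ih =>
    simp only [DTree.root_node1] at hz hg
    cases hv with | one hs hv =>
    have hs := unaryStep_of_step hs
    have hzs : ZeroUpTo (j - 1) s.root.2 := hz.of_unaryStep hs (by rw [hg.level]; omega)
    rcases hg.of_unaryStep hj hs with hgs | ⟨hq, hle⟩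
    · exact (ih hv hc.of_node1 hzs hgs).of_child false fun _ => rfl
    · have := hT s hv hc.of_node1 hq hzs
      omega
  | node2 c s₁ s₂ ih₁ ih₂ =>
    simp only [DTree.root_node2] at hz hg
    cases hv with | two hs hv₁ hv₂ =>
    obtain ⟨hq₁, hq₂, hw⟩ := hg.of_binStep hs
    obtain ⟨-, -, -, -, hadd⟩ := exists_of_binStep hs
    obtain ⟨hz₁, hz₂⟩ := (hadd ▸ hz).of_add
    obtain ⟨hc₁, hc₂⟩ := hc.of_node2
    by_cases hw₁ : weight j s₁.root.2 ≤ m + 1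
    · by_cases hw₂ : weight j s₂.root.2 ≤ m + 1
      · exact ⟨[false], [true], s₁, s₂, by simp, by simp, incomparable_false_true,
          by simp [subtreeAt], by simp [subtreeAt], hq₁, hq₂, hw₁, hw₂⟩
      · exact (ih₁ hv₁ hc₁ hz₁ (.inr <| .inr <| .inr ⟨hq₁, by omega⟩)).of_child false fun _ => rfl
    · exact (ih₂ hv₂ hc₂ hz₂ (.inr <| .inr <| .inr ⟨hq₂, by omega⟩)).of_child true fun _ => rfl

theorem two_pow_le_inl_of_qloop (hj : 1 ≤ j) (hT : TowerBound K j) {t : DTree BSt Cnt}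
    (hv : IsDeduction (Bsys K) t) (hc : t.IsLeafCovering {.qleaf}) (hq : t.root.1 = .qloop (j + 1))
    (hz : ZeroUpTo (j - 1) t.root.2)
    (ih : ∀ s : DTree BSt Cnt, s.height < t.height → IsDeduction (Bsys K) s →
      s.IsLeafCovering {.qleaf} → s.root.1 = .qinit (j + 1) → ZeroUpTo (j - 1) s.root.2 →
      2 ^ (tower j - weight j s.root.2) ≤ s.root.2 (.inl (j + 1))) :
    2 ^ (tower j - weight j t.root.2) ≤ t.root.2 (.inl (j + 1)) := by
  obtain ⟨c, s, rfl, hs, hv, hcs⟩ :=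
    eq_node1_of_isLeafCovering hv hc (by simp [hq]) (by simp [hq])
  simp only [DTree.root_node1] at hq hz ⊢
  obtain ⟨u, hu, hsu⟩ := id hs
  rw [hq] at hu
  rcases mem_Tu_qloop hu with ⟨hq', rfl⟩ | ⟨hq', rfl⟩
  · have hsc : s.root.2 = c.2 := funext fun i => by simpa using hsu i
    have := ih s (by simp [DTree.height]) hv hcs hq' (hsc ▸ hz)
    rwa [hsc] at this
  · have := hT s hv hcs hq' (hz.of_unaryStep hs (by simp [hq, BSt.level]; omega))
    have hl := hsu (.inl j)
    have hl' := hsu (.inl (j + 1))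
    simp [e] at hl hl'
    rw [Nat.sub_eq_zero_of_le (by unfold weight; omega), pow_zero]
    omega

theorem two_pow_le_inl (hj : 1 ≤ j) (hT : TowerBound K j) (t : DTree BSt Cnt)
    (hv : IsDeduction (Bsys K) t) (hc : t.IsLeafCovering {.qleaf}) (hq : t.root.1 = .qinit (j + 1))
    (hz : ZeroUpTo (j - 1) t.root.2) :
    2 ^ (tower j - weight j t.root.2) ≤ t.root.2 (.inl (j + 1)) := by
  induction t using (measure DTree.height).wf.induction with | _ t ih =>
  by_cases hW : tower j ≤ weight j t.root.2
  · rw [Nat.sub_eq_zero_of_le hW, pow_zero]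
    exact pos_inl_of_isLeafCovering hv hc (by omega) (by simp [hq, BSt.level])
  obtain ⟨a, b, ta, tb, -, -, hab, hta, htb, hqa, hqb, hwa, hwb⟩ :=
    twoLoops_of_gadgetBound hj hT (not_le.1 hW) t hv hc hz (.inl ⟨hq, le_rfl⟩)
  have hloop : ∀ {p tp}, subtreeAt t p = some tp → tp.root.1 = .qloop (j + 1) →
      weight j tp.root.2 ≤ weight j t.root.2 + 1 →
      2 ^ (tower j - (weight j t.root.2 + 1)) ≤ tp.root.2 (.inl (j + 1)) := by
    intro p tp htp hqp hwp
    refine le_trans (Nat.pow_le_pow_right two_pos (by omega)) <|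
      two_pow_le_inl_of_qloop hj hT (hv.of_subtreeAt htp) (hc.of_subtreeAt htp) hqp
        (zeroUpTo_of_subtreeAt hv hz htp (by simp [hqp, BSt.level]; omega))
        fun s hs => ih s (hs.trans_le (DTree.height_le_of_subtreeAt htp))
  have := inl_add_le_of_incomparable (j := j + 1) hv (by simp [hq, BSt.level]) hab hta htb
  have := hloop hta hqa hwa
  have := hloop htb hqb hwb
  rw [show tower j - weight j t.root.2 = tower j - (weight j t.root.2 + 1) + 1 by omega, pow_succ]
  omega

theorem towerBound_one : TowerBound K 1 := by
  intro t hv hc hq _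
  obtain ⟨c, s, rfl, ⟨u, hu, hs⟩, -⟩ :=
    eq_node1_of_isLeafCovering hv hc (by simp [hq]) (by simp [hq])
  rw [DTree.root_node1] at hq ⊢
  rw [hq] at hu
  obtain ⟨-, rfl⟩ := mem_Tu_qinit_one hu
  have := hs (.inl 1)
  simp [e] at this
  simp [tower]
  omega

theorem towerBound (hj : 1 ≤ j) : TowerBound K j := by
  induction j, hj using Nat.le_induction with
  | base => exact towerBound_one
  | succ j hj ih =>
    intro t hv hc hq hz
    have hw : weight j t.root.2 = 0 := by
      have := hz j hj (by omega)
      simp [weight, this]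
    simpa [tower, hw] using two_pow_le_inl hj ih t hv hc hq (hz.mono (by omega))

end Bsys

/-- Let `k > 1` and `D` be a `(qinit k, v₀)`-rooted `{qleaf}`-leaf-covering
deduction tree of `B_k`, with `v₀ (d_i) = v₀ (d'_i) = 0` for `1 ≤ i < k`.
Then for each node `n` of `D` with state label `qinit k` at which
`d_{k-1} + d'_{k-1}` has some value `h' < tower (k-1)`, there are two
incomparable proper descendants of `n` with state label `qloop k` at
which `d_{k-1} + d'_{k-1}` is at most `h' + 1`. -/
theorem Bk_two_descendants (k : ℕ) (hk : 1 < k) (v₀ : Cnt → ℕ)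
    (h0 : ∀ i, 1 ≤ i → i < k → v₀ (Sum.inl i) = 0 ∧ v₀ (Sum.inr i) = 0)
    (D : DTree BSt Cnt) (hD : IsDeduction (Bsys k) D)
    (hroot : D.root = (BSt.qinit k, v₀))
    (hcov : ∀ l ∈ D.leaves, l.1 = BSt.qleaf)
    (p : List Bool) (t : DTree BSt Cnt) (ht : subtreeAt D p = some t)
    (hst : t.root.1 = BSt.qinit k) (h' : ℕ)
    (hval : t.root.2 (Sum.inl (k - 1)) + t.root.2 (Sum.inr (k - 1)) = h')
    (hlt : h' < tower (k - 1)) :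
    ∃ (p₁ p₂ : List Bool) (t₁ t₂ : DTree BSt Cnt),
      p <+: p₁ ∧ p ≠ p₁ ∧ p <+: p₂ ∧ p ≠ p₂ ∧ Incomparable p₁ p₂ ∧
      subtreeAt D p₁ = some t₁ ∧ subtreeAt D p₂ = some t₂ ∧
      t₁.root.1 = BSt.qloop k ∧ t₂.root.1 = BSt.qloop k ∧
      t₁.root.2 (Sum.inl (k - 1)) + t₁.root.2 (Sum.inr (k - 1)) ≤ h' + 1 ∧
      t₂.root.2 (Sum.inl (k - 1)) + t₂.root.2 (Sum.inr (k - 1)) ≤ h' + 1 := by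
  obtain ⟨j, rfl⟩ : ∃ j, k = j + 1 := ⟨k - 1, by omega⟩
  have hj : 1 ≤ j := by omega
  simp only [Nat.add_sub_cancel] at hval ⊢
  have hz : Bsys.ZeroUpTo (j - 1) t.root.2 :=
    Bsys.zeroUpTo_of_subtreeAt hD (by rw [hroot]; exact fun i hi hij => h0 i hi (by omega)) ht
      (by simp [hst, BSt.level]; omega)
  obtain ⟨a, b, ta, tb, ha, hb, hab, hta, htb, hqa, hqb, hwa, hwb⟩ :=
    Bsys.twoLoops_of_gadgetBound hj (Bsys.towerBound hj) hlt t (hD.of_subtreeAt ht)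
      (DTree.IsLeafCovering.of_subtreeAt hcov ht) hz (.inl ⟨hst, hval.le⟩)
  refine ⟨p ++ a, p ++ b, ta, tb, List.prefix_append p a, ?_, List.prefix_append p b, ?_,
    hab.append_left p, ?_, ?_, hqa, hqb, hwa, hwb⟩
  · simpa using ha.symm
  · simpa using hb.symm
  · rw [DTree.subtreeAt_append, ht, Option.bind_some, hta]
  · rw [DTree.subtreeAt_append, ht, Option.bind_some, htb]
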